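/- arXiv:2110.12884 — 3 statements merged into one kernel-verified Lean document; each statement's English description precedes it below -/
import Mathlib

section
/- In a directed acyclic graph G, if every member B of the Markov boundary of a node Y (parents, children, and parents of children of Y) is d-separated from node A given a set R, then any function of the Markov boundary variables is, in every distribution Markov to G, conditionally independent of A given R. -/
/-- Undirected adjacency chain along a directed edge relation. -/
def AdjChain {V : Type*} (E : V → V → Prop) (p : List V) : Prop :=
  p.Chain' (fun a b => E a b ∨ E b a)

/-- A (node-distinct) path between `A` and `B` in the graph with edge relation `E`. -/
def IsPath {V : Type*} (E : V → V → Prop) (p : List V) (A B : V) : Prop :=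
  p.Nodup ∧ AdjChain E p ∧ p.head? = some A ∧ p.getLast? = some B

/-- The middle node `b` of a consecutive triple `a - b - c` blocks the path given `R`:
either `b` is a collider with no descendant in `R`, or a non-collider belonging to `R`. -/
def Blocks {V : Type*} (E : V → V → Prop) (R : Set V) (a b c : V) : Prop :=
  ((E a b ∧ E c b) ∧ ∀ d, Relation.ReflTransGen E b d → d ∉ R) ∨
  (¬(E a b ∧ E c b) ∧ b ∈ R)

/-- d-separation: every path between `A` and `B` is blocked by `R`. -/
def DSep {V : Type*} (E : V → V → Prop) (R : Set V) (A B : V) : Prop :=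
  ∀ p : List V, IsPath E p A B → ∃ a b c, [a, b, c] <:+: p ∧ Blocks E R a b c

/-- Markov boundary of `Y`: parents, children and parents of children of `Y`. -/
def MarkovBoundary {V : Type*} (E : V → V → Prop) (Y : V) : Set V :=
  {B | B ≠ Y ∧ (E B Y ∨ E Y B ∨ ∃ C, E Y C ∧ E B C)}

/-- Acyclicity of a directed edge relation. -/
def Acyclic {V : Type*} (E : V → V → Prop) : Prop := ∀ v, ¬ Relation.TransGen E v v

open scoped BigOperators

open Classical in
/-- Probability of an event under a weight function on a finite sample space. -/
noncomputable def Pr {Ω : Type*} [Fintype Ω] (μ : Ω → ℝ) (P : Ω → Prop) : ℝ :=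
  ∑ ω, if P ω then μ ω else 0

/-- `μ` is a probability mass function. -/
def IsPMF {Ω : Type*} [Fintype Ω] (μ : Ω → ℝ) : Prop :=
  (∀ ω, 0 ≤ μ ω) ∧ ∑ ω, μ ω = 1

/-- Conditional independence of `S` and `T` given `U` (multiplicative form). -/
def CondIndep {Ω α β γ : Type*} [Fintype Ω] (μ : Ω → ℝ)
    (S : Ω → α) (T : Ω → β) (U : Ω → γ) : Prop :=
  ∀ (a : α) (b : β) (c : γ),
    Pr μ (fun ω => S ω = a ∧ T ω = b ∧ U ω = c) * Pr μ (fun ω => U ω = c) =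
    Pr μ (fun ω => S ω = a ∧ U ω = c) * Pr μ (fun ω => T ω = b ∧ U ω = c)

/-- Independence of `S` and `T`. -/
def Indep {Ω α β : Type*} [Fintype Ω] (μ : Ω → ℝ) (S : Ω → α) (T : Ω → β) : Prop :=
  ∀ (a : α) (b : β),
    Pr μ (fun ω => S ω = a ∧ T ω = b) =
    Pr μ (fun ω => S ω = a) * Pr μ (fun ω => T ω = b)


open Classical in
lemma Pr_congr {Ω : Type*} [Fintype Ω] (μ : Ω → ℝ) {P Q : Ω → Prop}
    (h : ∀ ω, P ω ↔ Q ω) : Pr μ P = Pr μ Q := by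
  unfold Pr
  exact Finset.sum_congr rfl fun ω _ => by simp only [h ω]

open Classical in
lemma Pr_fiber {Ω α α' : Type*} [Fintype Ω] (μ : Ω → ℝ) (S : Ω → α) (f : α → α')
    (Q : Ω → Prop) (a : α') :
    Pr μ (fun ω => f (S ω) = a ∧ Q ω) =
      ∑ s ∈ (Finset.univ.image S).filter (fun s => f s = a),
        Pr μ (fun ω => S ω = s ∧ Q ω) := by
  unfold Pr
  rw [Finset.sum_comm]
  refine Finset.sum_congr rfl fun ω _ => ?_
  by_cases hq : f (S ω) = a ∧ Q ω
  · rw [if_pos hq]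
    rw [Finset.sum_eq_single_of_mem (S ω)
      (by simp [Finset.mem_filter, hq.1])]
    · rw [if_pos ⟨rfl, hq.2⟩]
    · intro s hs hne
      rw [if_neg]
      rintro ⟨h1, -⟩; exact hne h1.symm
  · rw [if_neg hq, Finset.sum_eq_zero]
    intro s hs
    rw [if_neg]
    rintro ⟨h1, h2⟩
    rcases Finset.mem_filter.mp hs with ⟨-, hfs⟩
    exact hq ⟨h1 ▸ hfs, h2⟩

open Classical in
lemma condIndep_comp {Ω α β γ α' β' : Type*} [Fintype Ω] (μ : Ω → ℝ)
    (S : Ω → α) (T : Ω → β) (U : Ω → γ) (f : α → α') (g : β → β')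
    (hST : CondIndep μ S T U) :
    CondIndep μ (fun ω => f (S ω)) (fun ω => g (T ω)) U := by
  intro a b c
  have h1 : Pr μ (fun ω => f (S ω) = a ∧ g (T ω) = b ∧ U ω = c) =
      ∑ s ∈ (Finset.univ.image S).filter (fun s => f s = a),
        ∑ t ∈ (Finset.univ.image T).filter (fun t => g t = b),
          Pr μ (fun ω => S ω = s ∧ T ω = t ∧ U ω = c) := by
    rw [Pr_fiber μ S f (fun ω => g (T ω) = b ∧ U ω = c) a]
    refine Finset.sum_congr rfl fun s _ => ?_
    rw [Pr_congr μ (show ∀ ω, (S ω = s ∧ g (T ω) = b ∧ U ω = c) ↔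
      (g (T ω) = b ∧ S ω = s ∧ U ω = c) from fun ω => by tauto)]
    rw [Pr_fiber μ T g (fun ω => S ω = s ∧ U ω = c) b]
    exact Finset.sum_congr rfl fun t _ => Pr_congr μ (fun ω => by tauto)
  have h2 : Pr μ (fun ω => f (S ω) = a ∧ U ω = c) =
      ∑ s ∈ (Finset.univ.image S).filter (fun s => f s = a),
        Pr μ (fun ω => S ω = s ∧ U ω = c) := Pr_fiber μ S f _ a
  have h3 : Pr μ (fun ω => g (T ω) = b ∧ U ω = c) =
      ∑ t ∈ (Finset.univ.image T).filter (fun t => g t = b),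
        Pr μ (fun ω => T ω = t ∧ U ω = c) := Pr_fiber μ T g _ b
  rw [h1, h2, h3, Finset.sum_mul_sum, Finset.sum_mul]
  refine Finset.sum_congr rfl fun s _ => ?_
  rw [Finset.sum_mul]
  exact Finset.sum_congr rfl fun t _ => hST s t c

/-- If every member of the Markov boundary of `Y` is d-separated from
`A` given `R`, then in any distribution Markov to the DAG (d-separation between sets
implies conditional independence of the corresponding random vectors), any function of
the Markov boundary variables is conditionally independent of `X_A` given `X_R`. -/
theorem stmt_5 {V Ω 𝒴 : Type*} [Fintype Ω] {χ : V → Type*}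
    (E : V → V → Prop) (hacyc : Acyclic E)
    (Y A : V) (R : Set V)
    (μ : Ω → ℝ) (hμ : IsPMF μ) (val : ∀ v, Ω → χ v)
    (hMarkov : ∀ S T C : Set V, (∀ s ∈ S, ∀ t ∈ T, DSep E C s t) →
      CondIndep μ (fun ω => (fun s : S => val s.1 ω))
        (fun ω => (fun t : T => val t.1 ω))
        (fun ω => (fun c : C => val c.1 ω)))
    (hsep : ∀ B ∈ MarkovBoundary E Y, DSep E R A B)
    (h : (∀ b : MarkovBoundary E Y, χ b.1) → 𝒴) :
    CondIndep μ (fun ω => val A ω)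
      (fun ω => h (fun b => val b.1 ω))
      (fun ω => (fun r : R => val r.1 ω)) := by
  have hsep' : ∀ s ∈ ({A} : Set V), ∀ t ∈ MarkovBoundary E Y, DSep E R s t := by
    rintro s rfl t ht
    exact hsep t ht
  have hc := hMarkov {A} (MarkovBoundary E Y) R hsep'
  exact condIndep_comp μ _ _ _ (fun v => v ⟨A, rfl⟩) h hc
end

section
/- For fixed generator distribution p_g, the discriminator D maximizing E_{x∼p_data}[log D(x)] + E_{x∼p_g}[log(1 − D(x))] is D*(x) = p_data(x) / (p_data(x) + p_g(x)). -/
open scoped BigOperators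

/-!
Since `log x ≤ x - 1`, for `0 ≤ a ≤ c` one has
`a log t - a log (a / c) = a log (c t / a) ≤ c t - a`.
Applying this to `(a, t)` and `(b, 1 - t)` with `c = a + b` and adding, the excess of
`a log t + b log (1 - t)` over its value at `t = a / (a + b)` is at most
`(a + b) t - a + (a + b) (1 - t) - b = 0`. The objective `V(D)` is a sum of such terms.
-/

open Real

lemma mul_log_sub_mul_log_div_le {a c t : ℝ} (ha : 0 ≤ a) (hac : a ≤ c) (ht : 0 < t) :
    a * log t - a * log (a / c) ≤ c * t - a := by
  rcases ha.eq_or_lt with rfl | ha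
  · simpa using mul_nonneg hac ht.le
  have hc : 0 < c := ha.trans_le hac
  calc a * log t - a * log (a / c) = a * log (c * t / a) := by
        rw [log_div (by positivity) ha.ne', log_mul hc.ne' ht.ne', log_div ha.ne' hc.ne']
        ring
    _ ≤ a * (c * t / a - 1) :=
        mul_le_mul_of_nonneg_left (log_le_sub_one_of_pos (by positivity)) ha.le
    _ = c * t - a := by field_simp

lemma mul_log_add_mul_log_one_sub_le {a b t : ℝ} (ha : 0 ≤ a) (hb : 0 ≤ b)
    (ht : t ∈ Set.Ioo 0 1) :
    a * log t + b * log (1 - t) ≤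
      a * log (a / (a + b)) + b * log (1 - a / (a + b)) := by
  rcases (add_nonneg ha hb).eq_or_lt with hab | hab
  · obtain ⟨rfl, rfl⟩ : a = 0 ∧ b = 0 := ⟨by linarith, by linarith⟩
    simp
  have h_one_sub : 1 - a / (a + b) = b / (a + b) := by field_simp; ring
  rw [h_one_sub]
  have hta := mul_log_sub_mul_log_div_le ha (le_add_of_nonneg_right hb) ht.1
  have htb := mul_log_sub_mul_log_div_le hb (le_add_of_nonneg_left ha) (sub_pos.2 ht.2)
  linarith

/-- For fixed generator distribution, the pointwise maximizer of
`a log t + b log (1 - t)` is `t = a / (a + b)`, and hence the discriminator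
`D*(x) = p_data(x) / (p_data(x) + p_g(x))` maximizes the GAN objective. -/
theorem stmt_11 {S : Type*} [Fintype S] (pdata pg : S → ℝ)
    (hd : IsPMF pdata) (hg : IsPMF pg) :
    (∀ a b : ℝ, 0 < a → 0 < b → ∀ t ∈ Set.Ioo (0 : ℝ) 1,
      a * Real.log t + b * Real.log (1 - t) ≤
      a * Real.log (a / (a + b)) + b * Real.log (1 - a / (a + b))) ∧
    (∀ D : S → ℝ, (∀ x, 0 < D x ∧ D x < 1) →
      ∑ x, (pdata x * Real.log (D x) + pg x * Real.log (1 - D x)) ≤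
      ∑ x, (pdata x * Real.log (pdata x / (pdata x + pg x)) +
            pg x * Real.log (1 - pdata x / (pdata x + pg x)))) := by
  exact ⟨fun a b ha hb t ht => mul_log_add_mul_log_one_sub_le ha.le hb.le ht,
    fun D hD => Finset.sum_le_sum fun x _ =>
      mul_log_add_mul_log_one_sub_le (hd.1 x) (hg.1 x) (hD x)⟩
end

section
/- Theorem (GAN global optimum): with the optimal discriminator plugged in, the generator objective C(G) = E_{p_data}[log D*(x)] + E_{p_g}[log(1−D*(x))] equals −log 4 + 2·JSD(p_data ‖ p_g), and is globally minimized if and only if p_g = p_data, attaining the value −log 4. -/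
open scoped BigOperators

open Classical in
/-- Finite Kullback–Leibler divergence (with the convention `0 log 0 = 0`). -/
noncomputable def KL {S : Type*} [Fintype S] (p q : S → ℝ) : ℝ :=
  ∑ x, if 0 < p x then p x * Real.log (p x / q x) else 0

/-- Jensen–Shannon divergence. -/
noncomputable def JSD {S : Type*} [Fintype S] (p q : S → ℝ) : ℝ :=
  (1 / 2) * KL p (fun x => (p x + q x) / 2) + (1 / 2) * KL q (fun x => (p x + q x) / 2)

/-!
Pointwise, `D*` turns the two expectations into `∑ p log (p / (p + q)) + ∑ q log (q / (p + q))`,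
and each of these sums is `KL(· ‖ (p + q) / 2) - log 2`; hence `C = -log 4 + 2 JSD`.
Gibbs' inequality, in the form `KL p q = ∑ q · klFun (p / q)` with `klFun ≥ 0` vanishing only
at `1`, shows that `JSD ≥ 0` with equality exactly when `p = q`.
-/

open Real InformationTheory

section KL

variable {S : Type*} [Fintype S] {p q : S → ℝ}

-- `q · klFun (p / q) = p log (p / q) - p + q`, and the correction terms sum to `∑ q - ∑ p = 0`.
theorem KL_eq_sum_mul_klFun (hp : ∀ x, 0 ≤ p x)
    (hpq : ∀ x, 0 < p x → 0 < q x) (hsum : ∑ x, p x = ∑ x, q x) :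
    KL p q = ∑ x, q x * klFun (p x / q x) := by
  have hterm : ∀ x, q x * klFun (p x / q x) =
      (if 0 < p x then p x * log (p x / q x) else 0) - (p x - q x) := by
    intro x
    rcases (hp x).lt_or_eq with hpx | hpx
    · have hqx := hpq x hpx
      rw [if_pos hpx, klFun_apply]
      field_simp
      ring
    · simp [← hpx, klFun_zero]
  simp only [hterm, Finset.sum_sub_distrib, hsum, sub_self, sub_zero, KL]

theorem KL_nonneg (hp : ∀ x, 0 ≤ p x) (hq : ∀ x, 0 ≤ q x)
    (hpq : ∀ x, 0 < p x → 0 < q x) (hsum : ∑ x, p x = ∑ x, q x) :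
    0 ≤ KL p q := by
  rw [KL_eq_sum_mul_klFun hp hpq hsum]
  exact Finset.sum_nonneg fun x _ ↦
    mul_nonneg (hq x) (klFun_nonneg (div_nonneg (hp x) (hq x)))

theorem KL_eq_zero_iff (hp : ∀ x, 0 ≤ p x) (hq : ∀ x, 0 ≤ q x)
    (hpq : ∀ x, 0 < p x → 0 < q x) (hsum : ∑ x, p x = ∑ x, q x) :
    KL p q = 0 ↔ p = q := by
  have hnonneg : ∀ x, 0 ≤ q x * klFun (p x / q x) := fun x ↦
    mul_nonneg (hq x) (klFun_nonneg (div_nonneg (hp x) (hq x)))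
  rw [KL_eq_sum_mul_klFun hp hpq hsum,
    Finset.sum_eq_zero_iff_of_nonneg fun x _ ↦ hnonneg x]
  refine ⟨fun h ↦ funext fun x ↦ ?_, fun h x _ ↦ ?_⟩
  · rcases (hq x).lt_or_eq with hqx | hqx
    · have hratio : p x / q x = 1 :=
        (klFun_eq_zero_iff (div_nonneg (hp x) (hq x))).1
          ((mul_eq_zero.1 (h x (Finset.mem_univ x))).resolve_left hqx.ne')
      rwa [div_eq_one_iff_eq hqx.ne'] at hratio
    · rw [← hqx]
      exact le_antisymm (not_lt.1 fun hpx ↦ (hpq x hpx).ne' hqx.symm) (hp x)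
  · rcases eq_or_ne (q x) 0 with hqx | hqx
    · exact mul_eq_zero_of_left hqx _
    · rw [h, div_self hqx, klFun_one, mul_zero]

end KL

section JSD

variable {S : Type*} [Fintype S] {p q : S → ℝ}

theorem KL_left_midpoint_nonneg_and_eq_zero_iff (hp : IsPMF p) (hq : IsPMF q) :
    0 ≤ KL p (fun x ↦ (p x + q x) / 2) ∧ (KL p (fun x ↦ (p x + q x) / 2) = 0 ↔ p = q) := by
  have hm : ∀ x, 0 ≤ (p x + q x) / 2 := fun x ↦ by linarith [hp.1 x, hq.1 x]
  have hpm : ∀ x, 0 < p x → 0 < (p x + q x) / 2 := fun x hpx ↦ by linarith [hq.1 x]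
  have hsum : ∑ x, p x = ∑ x, (p x + q x) / 2 := by
    rw [← Finset.sum_div, Finset.sum_add_distrib, hp.2, hq.2]
    norm_num
  refine ⟨KL_nonneg hp.1 hm hpm hsum, (KL_eq_zero_iff hp.1 hm hpm hsum).trans ?_⟩
  refine ⟨fun h ↦ funext fun x ↦ ?_, fun h ↦ funext fun x ↦ by rw [h]; ring⟩
  linarith [congrFun h x]

theorem KL_right_midpoint_nonneg_and_eq_zero_iff (hp : IsPMF p) (hq : IsPMF q) :
    0 ≤ KL q (fun x ↦ (p x + q x) / 2) ∧ (KL q (fun x ↦ (p x + q x) / 2) = 0 ↔ p = q) := by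
  simpa only [add_comm (q _) (p _), eq_comm (a := q)] using
    KL_left_midpoint_nonneg_and_eq_zero_iff hq hp

theorem JSD_nonneg (hp : IsPMF p) (hq : IsPMF q) : 0 ≤ JSD p q := by
  have h₁ := (KL_left_midpoint_nonneg_and_eq_zero_iff hp hq).1
  have h₂ := (KL_right_midpoint_nonneg_and_eq_zero_iff hp hq).1
  rw [JSD]
  positivity

theorem JSD_eq_zero_iff (hp : IsPMF p) (hq : IsPMF q) : JSD p q = 0 ↔ p = q := by
  obtain ⟨h₁, hiff₁⟩ := KL_left_midpoint_nonneg_and_eq_zero_iff hp hq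
  obtain ⟨h₂, hiff₂⟩ := KL_right_midpoint_nonneg_and_eq_zero_iff hp hq
  rw [JSD]
  refine ⟨fun h ↦ hiff₁.1 (by linarith), fun h ↦ ?_⟩
  rw [hiff₁.2 h, hiff₂.2 h]
  ring

theorem ite_mul_log_div_midpoint {a b : ℝ} (ha : 0 ≤ a) (hb : 0 ≤ b) :
    (if 0 < a then a * log (a / ((a + b) / 2)) else 0) = a * log (a / (a + b)) + a * log 2 := by
  rcases ha.lt_or_eq with ha | rfl
  · rw [if_pos ha, ← mul_add, ← log_mul (by positivity) two_ne_zero]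
    congr 2
    field_simp
  · simp

theorem KL_left_midpoint_eq (hp : IsPMF p) (hq : ∀ x, 0 ≤ q x) :
    KL p (fun x ↦ (p x + q x) / 2) = ∑ x, p x * log (p x / (p x + q x)) + log 2 := by
  simp only [KL, ite_mul_log_div_midpoint (hp.1 _) (hq _), Finset.sum_add_distrib,
    ← Finset.sum_mul, hp.2, one_mul]

theorem two_mul_JSD (hp : IsPMF p) (hq : IsPMF q) :
    2 * JSD p q = ∑ x, (p x * log (p x / (p x + q x)) + q x * log (q x / (p x + q x)))
      + log 4 := by
  have h₂ : KL q (fun x ↦ (p x + q x) / 2) = ∑ x, q x * log (q x / (p x + q x)) + log 2 := by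
    simpa only [add_comm (q _) (p _)] using KL_left_midpoint_eq hq hp.1
  rw [JSD, KL_left_midpoint_eq hp hq.1, h₂, Finset.sum_add_distrib,
    show (4 : ℝ) = 2 ^ 2 by norm_num, log_pow]
  push_cast
  ring

end JSD

theorem mul_log_one_sub_div_add {a b : ℝ} (ha : 0 ≤ a) (hb : 0 ≤ b) :
    b * log (1 - a / (a + b)) = b * log (b / (a + b)) := by
  rcases (add_nonneg ha hb).lt_or_eq with hab | hab
  · rw [one_sub_div hab.ne', add_sub_cancel_left]
  · rw [show b = 0 by linarith]
    simp

/-- GAN global optimum: with the optimal discriminator plugged in,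
the generator objective equals `-log 4 + 2 JSD(p_data ‖ p_g)`, is bounded below by
`-log 4`, and attains `-log 4` iff `p_g = p_data`. -/
theorem stmt_12 {S : Type*} [Fintype S] (pdata pg : S → ℝ)
    (hd : IsPMF pdata) (hg : IsPMF pg)
    (C : ℝ)
    (hC : C = ∑ x, (pdata x * Real.log (pdata x / (pdata x + pg x)) +
                    pg x * Real.log (1 - pdata x / (pdata x + pg x)))) :
    C = -Real.log 4 + 2 * JSD pdata pg ∧
    -Real.log 4 ≤ C ∧
    (C = -Real.log 4 ↔ pg = pdata) := by
  have hC' : C = ∑ x, (pdata x * log (pdata x / (pdata x + pg x)) +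
      pg x * log (pg x / (pdata x + pg x))) := by
    simp only [hC, mul_log_one_sub_div_add (hd.1 _) (hg.1 _)]
  have hJSD := two_mul_JSD hd hg
  refine ⟨by linarith, by linarith [JSD_nonneg hd hg], ?_⟩
  rw [eq_comm (a := pg), ← JSD_eq_zero_iff hd hg]
  constructor <;> intro h <;> linarith
end
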